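/- arXiv:2109.12128 — 4 statements merged into one kernel-verified Lean document; each statement's English description precedes it below -/
import Mathlib

section
/- Consider a causal structure G whose observed nodes are exactly the six variables A, B, C, X, Y, Z (G may in addition contain arbitrary unobserved nodes), in which A, B and C are exogenous, and let P be a joint distribution over the observed nodes compatible with G. If P satisfies the jamming conditions B ⫫ X and B ⫫ Z but B is not independent of the pair (X,Z), then G contains a directed path from B to X or from B to Z; consequently the causal model (G,P) is fine-tuned: there exist disjoint observed sets (namely {B} and {X}, or {B} and {Z}) that are independent under P although they are not d-separated in G. -/
/-!
Framework for cyclic and fine-tuned causal models and their compatibility with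
space-time (Vilasini–Colbeck).

* `CausalStructure V` : a directed graph (possibly cyclic) on `V` with a set of
  observed nodes; each observed node carries a random variable with finitely
  many values (here, `Val v`).
* d-separation is defined via walks that may traverse edges in either direction.
* A distribution over the observed nodes is `Compatible` with the graph if
  d-separation implies conditional independence.
* `InterventionalModel` packages, for each set of intervened nodes, the
  post-intervention distribution `P_{G_do(X)}` and the augmented distributions
  `P_{(G_do(X))_{I_Z}}` (both carried jointly with the intervention variables,
  which live on the `Sum.inr` copy of `V` and take values in `Option (Val v)`,
  `none` meaning "idle" and `some x` meaning "do(x)"), together with the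
  defining equations (1)–(4) of the framework.
* `Affects M X Y Z W` is "X affects Y given {do(Z), W}".
-/

open Classical

/-- A causal structure: a directed graph on `V` with a set of observed nodes. -/
structure CausalStructure (V : Type) where
  edge : V → V → Prop
  observed : Set V

namespace CausalStructure

variable {V : Type}

/-- A walk: consecutive vertices are adjacent in either direction. -/
def IsWalk (G : CausalStructure V) (p : List V) : Prop :=
  List.Chain' (fun u v => G.edge u v ∨ G.edge v u) p

/-- `u` has a (possibly trivial) directed path to `v`. -/
def Anc (G : CausalStructure V) (u v : V) : Prop :=
  Relation.ReflTransGen G.edge u v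

/-- The middle node of a consecutive triple `a, w, b` blocks a walk relative to `Z`:
either a chain `a→w→b`/`b→w→a` or a fork `a←w→b` with `w ∈ Z`, or a collider
`a→w←b` such that neither `w` nor any descendant of `w` lies in `Z`. -/
def BlocksTriple (G : CausalStructure V) (Z : Set V) (a w b : V) : Prop :=
  (((G.edge a w ∧ G.edge w b) ∨ (G.edge b w ∧ G.edge w a) ∨ (G.edge w a ∧ G.edge w b)) ∧ w ∈ Z)
    ∨ ((G.edge a w ∧ G.edge b w) ∧ ∀ d, G.Anc w d → d ∉ Z)

/-- A walk is blocked by `Z` if some consecutive triple in it is blocked. -/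
def Blocked (G : CausalStructure V) (Z : Set V) (p : List V) : Prop :=
  ∃ a w b, [a, w, b] <:+: p ∧ G.BlocksTriple Z a w b

/-- d-separation of `X` from `Y` given `Z`: every walk from `X` to `Y` is blocked. -/
def DSep (G : CausalStructure V) (X Y Z : Set V) : Prop :=
  ∀ p : List V, G.IsWalk p → (∃ x ∈ X, p.head? = some x) →
    (∃ y ∈ Y, p.getLast? = some y) → G.Blocked Z p

/-- A node with no incoming edges. -/
def Exogenous (G : CausalStructure V) (v : V) : Prop := ∀ u, ¬ G.edge u v

/-- `G_{X̄}` : delete all edges into `X`. -/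
def cutIn (G : CausalStructure V) (X : Set V) : CausalStructure V where
  edge u v := G.edge u v ∧ v ∉ X
  observed := G.observed

/-- `G_{Z̲}` : delete all edges out of `Z`. -/
def cutOut (G : CausalStructure V) (Z : Set V) : CausalStructure V where
  edge u v := G.edge u v ∧ u ∉ Z
  observed := G.observed

/-- The post-intervention graph `G_do(X)` over `V ⊕ V`; `Sum.inr v` is the
intervention node `I_v`, which (for `v ∈ X`) is the unique parent of `v`. -/
def doGraph (G : CausalStructure V) (X : Set V) : CausalStructure (V ⊕ V) where
  edge a b :=
    match a, b with
    | .inl u, .inl v => G.edge u v ∧ v ∉ X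
    | .inr u, .inl v => u = v ∧ v ∈ X
    | _, _ => False
  observed := Sum.inl '' G.observed ∪ Sum.inr '' X

/-- The graph `(G_do(X))_{I_Z}` over `V ⊕ V`: edges into `X` are cut, and
intervention nodes are attached to every node of `X ∪ Z`.  The augmented graph
`G_{I_X}` of the paper is `augGraph G ∅ X`. -/
def augGraph (G : CausalStructure V) (X Z : Set V) : CausalStructure (V ⊕ V) where
  edge a b :=
    match a, b with
    | .inl u, .inl v => G.edge u v ∧ v ∉ X
    | .inr u, .inl v => u = v ∧ v ∈ X ∪ Z
    | _, _ => False
  observed := Sum.inl '' G.observed ∪ Sum.inr '' (X ∪ Z)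

end CausalStructure

/-- A set of nodes is a cause of another if there is a directed path between them. -/
def IsCause {V : Type} (G : CausalStructure V) (X Y : Set V) : Prop :=
  ∃ u ∈ X, ∃ v ∈ Y, Relation.TransGen G.edge u v

noncomputable section

/-- Probability of an event under a (finitely supported) weight function. -/
def Pr {ι : Type} [Fintype ι] [DecidableEq ι] {W : ι → Type} [∀ i, Fintype (W i)]
    (P : (∀ i, W i) → ℝ) (E : Set (∀ i, W i)) : ℝ :=
  ∑ f, E.indicator P f

/-- Conditional probability of `E` given `B` (meaningful when `Pr P B > 0`). -/
def cPr {ι : Type} [Fintype ι] [DecidableEq ι] {W : ι → Type} [∀ i, Fintype (W i)]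
    (P : (∀ i, W i) → ℝ) (E B : Set (∀ i, W i)) : ℝ :=
  Pr P (E ∩ B) / Pr P B

def IsProbDist {ι : Type} [Fintype ι] [DecidableEq ι] {W : ι → Type} [∀ i, Fintype (W i)]
    (P : (∀ i, W i) → ℝ) : Prop :=
  (∀ f, 0 ≤ P f) ∧ ∑ f, P f = 1

/-- The event that an assignment agrees with `x` on the set `A`. -/
def agreeE {ι : Type} {W : ι → Type} (A : Set ι) (x : ∀ i, W i) : Set (∀ i, W i) :=
  {f | ∀ i ∈ A, f i = x i}

/-- Conditional independence `X ⫫ Y | Z` (in product form). -/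
def CondIndep {ι : Type} [Fintype ι] [DecidableEq ι] {W : ι → Type} [∀ i, Fintype (W i)]
    (P : (∀ i, W i) → ℝ) (X Y Z : Set ι) : Prop :=
  ∀ x : ∀ i, W i,
    Pr P (agreeE (X ∪ Y ∪ Z) x) * Pr P (agreeE Z x)
      = Pr P (agreeE (X ∪ Z) x) * Pr P (agreeE (Y ∪ Z) x)

/-- Compatibility of a distribution over the observed nodes with a causal
structure: d-separation (between pairwise disjoint observed sets) implies
conditional independence. -/
def Compatible {V : Type} [Fintype V] [DecidableEq V] (G : CausalStructure V)
    {Val : V → Type} [∀ v, Fintype (Val v)] (P : (∀ v, Val v) → ℝ) : Prop :=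
  ∀ X Y Z : Set V, X ⊆ G.observed → Y ⊆ G.observed → Z ⊆ G.observed →
    Disjoint X Y → Disjoint X Z → Disjoint Y Z → G.DSep X Y Z → CondIndep P X Y Z

/-- Values on the augmented node set `V ⊕ V`: original values on `Sum.inl v`,
intervention settings on `Sum.inr v` (`none` = idle, `some x` = do(x)). -/
def AugVal {V : Type} (Val : V → Type) : V ⊕ V → Type :=
  fun w => Sum.elim Val (fun v => Option (Val v)) w

instance {V : Type} {Val : V → Type} [∀ v, Fintype (Val v)] :
    ∀ w, Fintype (AugVal Val w)
  | .inl v => inferInstanceAs (Fintype (Val v))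
  | .inr v => inferInstanceAs (Fintype (Option (Val v)))

/-- The event (on augmented assignments) that the original variables lie in `E`. -/
def inlE {V : Type} {Val : V → Type} (E : Set (∀ v, Val v)) :
    Set (∀ w, AugVal Val w) :=
  {g | (fun v => g (Sum.inl v)) ∈ E}

/-- The event `I_X = idle`. -/
def idleE {V : Type} {Val : V → Type} (X : Set V) : Set (∀ w, AugVal Val w) :=
  {g | ∀ v ∈ X, g (Sum.inr v) = (none : Option (Val v))}

/-- The event `I_X = do(x)`. -/
def doE {V : Type} {Val : V → Type} (X : Set V) (x : ∀ v, Val v) :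
    Set (∀ w, AugVal Val w) :=
  {g | ∀ v ∈ X, g (Sum.inr v) = (some (x v) : Option (Val v))}

variable {V : Type} [Fintype V] [DecidableEq V]

/-- An interventional model for the causal model `(G, P)`: for each subset `X` of
observed nodes (and each further disjoint subset `Z`), the post-intervention
distribution `post X` (for `G_do(X)`) and the augmented distribution `aug X Z`
(for `(G_do(X))_{I_Z}`; the distribution for `G_{I_X}` is `aug ∅ X`), each
compatible with its graph, satisfying the defining equations (1)–(4) of the
framework (also relativized to any post-intervention model). -/
structure InterventionalModel (G : CausalStructure V) (Val : V → Type)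
    [∀ v, Fintype (Val v)] (P : (∀ v, Val v) → ℝ) : Type where
  post : Set V → (∀ w, AugVal Val w) → ℝ
  aug : Set V → Set V → (∀ w, AugVal Val w) → ℝ
  post_prob : ∀ X : Set V, IsProbDist (post X)
  aug_prob : ∀ X Z : Set V, IsProbDist (aug X Z)
  post_compat : ∀ X : Set V, X ⊆ G.observed → Compatible (G.doGraph X) (post X)
  aug_compat : ∀ X Z : Set V, X ⊆ G.observed → Z ⊆ G.observed → Disjoint X Z →
    Compatible (G.augGraph X Z) (aug X Z)
  /-- intervening on nothing reproduces the observational distribution. -/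
  post_empty : ∀ Y : Set V, Y ⊆ G.observed → ∀ y : ∀ v, Val v,
    Pr (post ∅) (inlE (agreeE Y y)) = Pr P (agreeE Y y)
  /-- equation (1): conditioned on the interventions `I_Z` all being idle, the
  augmented distribution reproduces `P_{G_do(X)}`. -/
  eq1 : ∀ X Z : Set V, X ⊆ G.observed → Z ⊆ G.observed → Disjoint X Z →
    ∀ Y : Set V, Y ⊆ G.observed → Disjoint Y (X ∪ Z) → ∀ y : ∀ v, Val v,
    0 < Pr (aug X Z) (idleE Z) →
    cPr (aug X Z) (inlE (agreeE Y y)) (idleE Z) = Pr (post X) (inlE (agreeE Y y))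
  /-- equation (2), first equality. -/
  eq2a : ∀ X Z : Set V, X ⊆ G.observed → Z ⊆ G.observed → Disjoint X Z →
    ∀ Y : Set V, Y ⊆ G.observed → Disjoint Y (X ∪ Z) → ∀ y z : ∀ v, Val v,
    0 < Pr (aug X Z) (doE Z z) → 0 < Pr (post (X ∪ Z)) (doE Z z) →
    cPr (aug X Z) (inlE (agreeE Y y)) (doE Z z)
      = cPr (post (X ∪ Z)) (inlE (agreeE Y y)) (doE Z z)
  /-- equation (2), second equality. -/
  eq2b : ∀ X Z : Set V, X ⊆ G.observed → Z ⊆ G.observed → Disjoint X Z →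
    ∀ Y : Set V, Y ⊆ G.observed → Disjoint Y (X ∪ Z) → ∀ y z : ∀ v, Val v,
    0 < Pr (post (X ∪ Z)) (doE Z z) → 0 < Pr (post (X ∪ Z)) (inlE (agreeE Z z)) →
    cPr (post (X ∪ Z)) (inlE (agreeE Y y)) (doE Z z)
      = cPr (post (X ∪ Z)) (inlE (agreeE Y y)) (inlE (agreeE Z z))
  /-- equation (3). -/
  eq3 : ∀ X Z : Set V, X ⊆ G.observed → Z ⊆ G.observed → Disjoint X Z →
    ∀ Y : Set V, Y ⊆ G.observed → Disjoint Y (X ∪ Z) → ∀ y z : ∀ v, Val v,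
    0 < Pr (aug X Z) (doE Z z ∩ inlE (agreeE Z z)) →
    cPr (aug X Z) (inlE (agreeE Y y)) (doE Z z ∩ inlE (agreeE Z z))
      = cPr (aug X Z) (inlE (agreeE Y y)) (doE Z z)
  /-- equation (4). -/
  eq4 : ∀ X Z : Set V, X ⊆ G.observed → Z ⊆ G.observed → Disjoint X Z →
    ∀ z z' : ∀ v, Val v, ∀ v ∈ Z, z v ≠ z' v →
    Pr (aug X Z) (doE Z z ∩ inlE (agreeE Z z')) = 0

/-- Pairwise disjointness of four sets. -/
def PairwiseDisj4 {α : Type} (X Y Z W : Set α) : Prop :=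
  Disjoint X Y ∧ Disjoint X Z ∧ Disjoint X W ∧
    Disjoint Y Z ∧ Disjoint Y W ∧ Disjoint Z W

variable {G : CausalStructure V} {Val : V → Type} [∀ v, Fintype (Val v)]
  {P : (∀ v, Val v) → ℝ}

/-- `X` affects `Y` given `{do(Z), W}`: there are values `x, z, w` (packaged in
`f`) and `y` with `P_{G_do(X∪Z)}(Y=y | X=x, Z=z, W=w) ≠ P_{G_do(Z)}(Y=y | Z=z, W=w)`
(asserted at values where the conditioning events have positive probability).
The sets are required to be pairwise disjoint subsets of the observed nodes.
`Affects M X Y ∅ ∅` is the unconditional zeroth-order relation "X affects Y". -/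
def Affects (M : InterventionalModel G Val P) (X Y Z W : Set V) : Prop :=
  X ⊆ G.observed ∧ Y ⊆ G.observed ∧ Z ⊆ G.observed ∧ W ⊆ G.observed ∧
  PairwiseDisj4 X Y Z W ∧
  ∃ f y : ∀ v, Val v,
    0 < Pr (M.post (X ∪ Z)) (inlE (agreeE (X ∪ Z ∪ W) f)) ∧
    0 < Pr (M.post Z) (inlE (agreeE (Z ∪ W) f)) ∧
    cPr (M.post (X ∪ Z)) (inlE (agreeE Y y)) (inlE (agreeE (X ∪ Z ∪ W) f))
      ≠ cPr (M.post Z) (inlE (agreeE Y y)) (inlE (agreeE (Z ∪ W) f))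

/-- The affects relation `X` affects `Y` given `{do(Z), W}` is irreducible if
every nonempty proper subset `s ⊂ X` affects `Y` given `{do(Z ∪ (X \ s)), W}`. -/
def IrreducibleAffects (M : InterventionalModel G Val P) (X Y Z W : Set V) : Prop :=
  ∀ s : Set V, s ⊂ X → s.Nonempty → Affects M s Y (Z ∪ (X \ s)) W

/-- The affects relation holds and is irreducible. -/
def AffectsIrred (M : InterventionalModel G Val P) (X Y Z W : Set V) : Prop :=
  Affects M X Y Z W ∧ IrreducibleAffects M X Y Z W

end
/-! ### Affects causal loops -/

section Loops

variable {V : Type} [Fintype V] [DecidableEq V] {G : CausalStructure V}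
  {Val : V → Type} [∀ v, Fintype (Val v)] {P : (∀ v, Val v) → ℝ}

/-- A complete chain of irreducible affects relations from `U` to `W`:
sets `S i ⊆ Ŝ i` with `S 0 = U`, each `Ŝ i` affecting `S (i+1)` irreducibly,
and the last `Ŝ` affecting `W` irreducibly. -/
def CompleteChain (M : InterventionalModel G Val P) (U W : Set V) : Prop :=
  ∃ (m : ℕ) (S Shat : Fin (m + 1) → Set V),
    S 0 = U ∧ (∀ i, S i ⊆ Shat i) ∧
    (∀ i : Fin m, AffectsIrred M (Shat i.castSucc) (S i.succ) ∅ ∅) ∧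
    AffectsIrred M (Shat (Fin.last m)) W ∅ ∅

/-- Type 1 affects causal loop. -/
def ACL1 (M : InterventionalModel G Val P) : Prop :=
  ∃ x y : V, Affects M {x} {y} ∅ ∅ ∧ Affects M {y} {x} ∅ ∅

/-- Type 2 affects causal loop: a chain of single-variable affects relations
from `x` to `y` together with `y` affects `x`. -/
def ACL2 (M : InterventionalModel G Val P) : Prop :=
  ∃ (l : List V) (x y : V), l.head? = some x ∧ l.getLast? = some y ∧
    l.Chain' (fun a b => Affects M {a} {b} ∅ ∅) ∧ Affects M {y} {x} ∅ ∅

/-- Type 3 affects causal loop. -/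
def ACL3 (M : InterventionalModel G Val P) : Prop :=
  ∃ (S1 S2 : Set V) (e1 e2 : V), e1 ∈ S1 ∧ e2 ∈ S2 ∧ Disjoint S1 S2 ∧
    AffectsIrred M S1 {e2} ∅ ∅ ∧ AffectsIrred M S2 {e1} ∅ ∅

/-- Type 4 affects causal loop: a cyclic chain of irreducible affects relations. -/
def ACL4 (M : InterventionalModel G Val P) : Prop :=
  ∃ (n : ℕ) (c : Fin (n + 1) → Set V), ∀ i, AffectsIrred M (c i) (c (i + 1)) ∅ ∅

/-- Type 5 affects causal loop: a complete affects chain from a set to itself. -/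
def ACL5 (M : InterventionalModel G Val P) : Prop :=
  ∃ S1 : Set V, CompleteChain M S1 S1

/-- Type 6 affects causal loop. -/
def ACL6 (M : InterventionalModel G Val P) : Prop :=
  ∃ S1 S2 : Set V, AffectsIrred M S1 S2 ∅ ∅ ∧
    ∀ e2 ∈ S2, ∃ s1 ⊆ S1, CompleteChain M {e2} s1

end Loops

/-! ### Space-time structure and embeddings -/

/-- A space-time: a partially ordered set. -/
structure Spacetime : Type 1 where
  carrier : Type
  le : carrier → carrier → Prop
  le_refl : ∀ a, le a a
  le_trans : ∀ a b c, le a b → le b c → le a c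
  le_antisymm : ∀ a b, le a b → le b a → a = b

/-- An embedding of a set of random variables (the type `V`) in a space-time:
a location and an accessible region for each RV. -/
structure STEmbedding (V : Type) (S : Spacetime) where
  loc : V → S.carrier
  reg : V → Set S.carrier

namespace STEmbedding

variable {V : Type} {S : Spacetime}

/-- The inclusive future `F̄(x)` of an (ordered) random variable. -/
def future (E : STEmbedding V S) (x : V) : Set S.carrier := {t | S.le (E.loc x) t}

/-- Accessible region of a set of RVs (`= S.carrier` for the empty set). -/
def regOf (E : STEmbedding V S) (A : Set V) : Set S.carrier := ⋂ x ∈ A, E.reg x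

/-- Joint inclusive future of a set of RVs (`= S.carrier` for the empty set). -/
def futOf (E : STEmbedding V S) (A : Set V) : Set S.carrier := ⋂ x ∈ A, E.future x

end STEmbedding

/-- An abstract affects relation "src affects tgt given {do(doSet), cond}". -/
structure AffectsRelation (V : Type) where
  src : Set V
  tgt : Set V
  doSet : Set V
  cond : Set V

/-- Well-formedness: components pairwise disjoint, `src` and `tgt` nonempty. -/
def AffectsRelation.WF {V : Type} (r : AffectsRelation V) : Prop :=
  r.src.Nonempty ∧ r.tgt.Nonempty ∧
  Disjoint r.src r.tgt ∧ Disjoint r.src r.doSet ∧ Disjoint r.src r.cond ∧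
  Disjoint r.tgt r.doSet ∧ Disjoint r.tgt r.cond ∧ Disjoint r.doSet r.cond

/-- The unconditional zeroth-order relation "X affects Y". -/
def plainRel {V : Type} (X Y : Set V) : AffectsRelation V := ⟨X, Y, ∅, ∅⟩

/-- A set of affects relations, some of which are designated irreducible. -/
structure AffectsFamily (V : Type) where
  rels : Set (AffectsRelation V)
  irr : Set (AffectsRelation V)

/-- compat1: for each irreducible relation of the family, the joint accessible
region of `tgt ∪ doSet ∪ cond` is contained in the accessible region of `src`. -/
def Compat1 {V : Type} {S : Spacetime} (A : AffectsFamily V) (E : STEmbedding V S) : Prop :=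
  ∀ r : AffectsRelation V, r ∈ A.rels → r ∈ A.irr →
    E.regOf r.tgt ∩ E.regOf r.doSet ∩ E.regOf r.cond ⊆ E.regOf r.src

/-- compat2: the accessible region of each RV is its inclusive future. -/
def Compat2 {V : Type} {S : Spacetime} (E : STEmbedding V S) : Prop :=
  ∀ x : V, E.reg x = E.future x

/-- Compatibility of a set of affects relations with a space-time embedding. -/
def CompatFam {V : Type} {S : Spacetime} (A : AffectsFamily V) (E : STEmbedding V S) : Prop :=
  Compat1 A E ∧ Compat2 E

/-- compat1′: as compat1 but stated with inclusive futures in place of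
accessible regions. -/
def Compat1' {V : Type} {S : Spacetime} (A : AffectsFamily V) (E : STEmbedding V S) : Prop :=
  ∀ r : AffectsRelation V, r ∈ A.rels → r ∈ A.irr →
    E.futOf (r.tgt ∪ r.doSet ∪ r.cond) ⊆ E.futOf r.src

/-- A non-trivial embedding: no two RVs `x`, `y` with "x affects y" get the same location. -/
def NonTrivialEmb {V : Type} {S : Spacetime} (A : AffectsFamily V) (E : STEmbedding V S) : Prop :=
  ∀ x y : V, plainRel {x} {y} ∈ A.rels → E.loc x ≠ E.loc y

/-- A non-degenerate embedding: all RVs get pairwise distinct locations. -/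
def NonDegenerateEmb {V : Type} {S : Spacetime} (E : STEmbedding V S) : Prop :=
  Function.Injective E.loc

/-- The family of affects relations holding in a causal model (with its
interventional model); the designated irreducible relations are those that are
irreducible in the model. -/
def modelFamily {V : Type} [Fintype V] [DecidableEq V] {G : CausalStructure V}
    {Val : V → Type} [∀ v, Fintype (Val v)] {P : (∀ v, Val v) → ℝ}
    (M : InterventionalModel G Val P) : AffectsFamily V where
  rels := {r | Affects M r.src r.tgt r.doSet r.cond}
  irr := {r | Affects M r.src r.tgt r.doSet r.cond ∧
              IrreducibleAffects M r.src r.tgt r.doSet r.cond}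

/-- Lift an affects relation along `Sum.inl`. -/
def liftRel {V T : Type} (r : AffectsRelation V) : AffectsRelation (V ⊕ (V × T)) :=
  ⟨Sum.inl '' r.src, Sum.inl '' r.tgt, Sum.inl '' r.doSet, Sum.inl '' r.cond⟩

/-- The augmented family `𝒜'`: the relations of `𝒜` together with, for each RV
`x` and each point `p` of its accessible region, the (irreducible, singleton
source) relation "x affects its copy at p". -/
def augFamily {V : Type} {S : Spacetime} (A : AffectsFamily V) (E : STEmbedding V S) :
    AffectsFamily (V ⊕ (V × S.carrier)) where
  rels := (liftRel (T := S.carrier) '' A.rels) ∪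
    {r | ∃ x p, p ∈ E.reg x ∧ r = plainRel {Sum.inl x} {Sum.inr (x, p)}}
  irr := (liftRel (T := S.carrier) '' A.irr) ∪
    {r | ∃ x p, p ∈ E.reg x ∧ r = plainRel {Sum.inl x} {Sum.inr (x, p)}}

/-- The augmented embedding `S'`: each copy `(x, p)` is located at `p`. -/
def augEmbedding {V : Type} {S : Spacetime} (E : STEmbedding V S) :
    STEmbedding (V ⊕ (V × S.carrier)) S where
  loc := fun w => match w with
    | .inl x => E.loc x
    | .inr q => q.2
  reg := fun w => match w with
    | .inl x => E.reg x
    | .inr q => {t | S.le q.2 t}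

section JammingAux

variable {V : Type}

lemma blocked_of_tail {G : CausalStructure V} {Z : Set V} {a : V} {p : List V}
    (h : G.Blocked Z p) : G.Blocked Z (a :: p) := by
  obtain ⟨x, w, y, hinf, hb⟩ := h
  exact ⟨x, w, y, hinf.trans (List.suffix_cons a p).isInfix, hb⟩

lemma walk_directed {G : CausalStructure V} :
    ∀ (t : List V) (a b : V), G.edge a b →
      List.Chain' (fun u v => G.edge u v ∨ G.edge v u) (a :: b :: t) →
      ¬ G.Blocked ∅ (a :: b :: t) → List.Chain' G.edge (a :: b :: t) := by
  intro t
  induction t with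
  | nil =>
      intro a b hab _ _
      exact List.isChain_cons_cons.2 ⟨hab, List.isChain_singleton b⟩
  | cons c t ih =>
      intro a b hab hw hnb
      have hw' : List.Chain' (fun u v => G.edge u v ∨ G.edge v u) (b :: c :: t) :=
        (List.isChain_cons_cons.1 hw).2
      have hbc : G.edge b c ∨ G.edge c b := (List.isChain_cons_cons.1 hw').1
      have hnb' : ¬ G.Blocked ∅ (b :: c :: t) := fun h => hnb (blocked_of_tail h)
      have hebc : G.edge b c := by
        rcases hbc with h | h
        · exact h
        · by_cases h' : G.edge b c
          · exact h'
          · exfalso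
            apply hnb
            refine ⟨a, b, c, ⟨[], t, by simp⟩, Or.inr ⟨⟨hab, h⟩, ?_⟩⟩
            intro d _ hd
            exact hd
      exact List.isChain_cons_cons.2 ⟨hab, ih b c hebc hw' hnb'⟩

lemma chain'_transGen {G : CausalStructure V} :
    ∀ (t : List V) (a b y : V), List.Chain' G.edge (a :: b :: t) →
      (a :: b :: t).getLast? = some y → Relation.TransGen G.edge a y := by
  intro t
  induction t with
  | nil =>
      intro a b y hc hl
      have : b = y := by simpa using hl
      exact this ▸ Relation.TransGen.single (List.isChain_cons_cons.1 hc).1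
  | cons c t ih =>
      intro a b y hc hl
      have h1 := (List.isChain_cons_cons.1 hc).1
      have h2 := (List.isChain_cons_cons.1 hc).2
      have hl' : (b :: c :: t).getLast? = some y := by
        rw [← hl]; simp [List.getLast?_cons_cons]
      exact Relation.TransGen.head h1 (ih b c y h2 hl')

end JammingAux

/-- In a causal structure whose observed nodes are exactly
`{A, B, C, X, Y, Z}` with `A, B, C` exogenous, any compatible distribution
satisfying the jamming conditions `B ⫫ X`, `B ⫫ Z`, `B ⫫̸ (X,Z)` forces a
directed path from `B` to `X` or from `B` to `Z`; hence the causal model is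
fine-tuned: `{B}` and `{X}`, or `{B}` and `{Z}`, are independent but not
d-separated. -/
theorem jamming_is_finetuned
    {V : Type} [Fintype V] [DecidableEq V] (G : CausalStructure V)
    {Val : V → Type} [∀ v, Fintype (Val v)] (P : (∀ v, Val v) → ℝ)
    (hP : IsProbDist P) (hcomp : Compatible G P)
    (A B C X Y Z : V)
    (hdistinct : List.Pairwise (· ≠ ·) [A, B, C, X, Y, Z])
    (hobs : G.observed = {A, B, C, X, Y, Z})
    (hexoA : G.Exogenous A) (hexoB : G.Exogenous B) (hexoC : G.Exogenous C)
    (hBX : CondIndep P {B} {X} ∅) (hBZ : CondIndep P {B} {Z} ∅)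
    (hBXZ : ¬ CondIndep P {B} {X, Z} ∅) :
    (Relation.TransGen G.edge B X ∨ Relation.TransGen G.edge B Z) ∧
    ((CondIndep P {B} {X} ∅ ∧ ¬ G.DSep {B} {X} ∅) ∨
     (CondIndep P {B} {Z} ∅ ∧ ¬ G.DSep {B} {Z} ∅)) := by
  have hBall : ∀ b ∈ [C, X, Y, Z], B ≠ b :=
    (List.pairwise_cons.1 (List.pairwise_cons.1 hdistinct).2).1
  have hBneX : B ≠ X := hBall X (by simp)
  have hBneZ : B ≠ Z := hBall Z (by simp)
  -- B is not d-separated from {X, Z} by ∅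
  have hnd : ¬ G.DSep {B} ({X, Z} : Set V) ∅ := by
    intro hds
    apply hBXZ
    refine hcomp {B} {X, Z} ∅ ?_ ?_ ?_ ?_ ?_ ?_ hds
    · intro v hv
      have hvB : v = B := hv
      rw [hobs, hvB]; simp
    · intro v hv
      rw [hobs]
      rcases (Set.mem_insert_iff.1 hv) with h | h
      · rw [h]; simp
      · rw [Set.mem_singleton_iff.1 h]; simp
    · exact Set.empty_subset _
    · rw [Set.disjoint_left]
      intro v hv hv'
      have hvB : v = B := hv
      rcases (Set.mem_insert_iff.1 hv') with h | h
      · exact hBneX (hvB ▸ h)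
      · exact hBneZ (hvB ▸ Set.mem_singleton_iff.1 h)
    · exact Set.disjoint_empty _
    · exact Set.disjoint_empty _
  unfold CausalStructure.DSep at hnd
  push_neg at hnd
  obtain ⟨p, hw, ⟨b, hb, hhead⟩, ⟨y, hy, hlast⟩, hnb⟩ := hnd
  have hbB : b = B := hb
  rw [hbB] at hhead
  clear hb hbB
  have hy' : y = X ∨ y = Z := by
    rcases (Set.mem_insert_iff.1 hy) with h | h
    · exact Or.inl h
    · exact Or.inr (Set.mem_singleton_iff.1 h)
  -- p = B :: c :: t
  match p, hhead, hlast, hw, hnb with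
  | [], hhead, hlast, hw, hnb => exact absurd hhead (by simp)
  | [b0], hhead, hlast, hw, hnb =>
      exfalso
      have hyb : y = b0 := by simpa using hlast.symm
      have hbB : b0 = B := by simpa using hhead
      rcases hy' with h | h
      · exact hBneX ((hbB ▸ hyb) ▸ h)
      · exact hBneZ ((hbB ▸ hyb) ▸ h)
  | b0 :: c :: t, hhead, hlast, hw, hnb =>
      have hbB : b0 = B := by simpa using hhead
      rw [hbB] at hw hnb hlast hhead
      have hfirst : G.edge B c := by
        rcases (List.isChain_cons_cons.1 hw).1 with h | h
        · exact h
        · exact absurd h (hexoB c)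
      have hchain : List.Chain' G.edge (B :: c :: t) :=
        walk_directed t B c hfirst hw hnb
      have htg : Relation.TransGen G.edge B y :=
        chain'_transGen t B c y hchain hlast
      rcases hy' with hy | hy
      · -- y = X
        subst hy
        refine ⟨Or.inl htg, Or.inl ⟨hBX, ?_⟩⟩
        intro hds
        exact hnb (hds _ hw ⟨B, rfl, hhead⟩ ⟨y, rfl, hlast⟩)
      · -- y = Z
        subst hy
        refine ⟨Or.inr htg, Or.inr ⟨hBZ, ?_⟩⟩
        intro hds
        exact hnb (hds _ hw ⟨B, rfl, hhead⟩ ⟨y, rfl, hlast⟩)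
end

section
/- Let S1, S2, S3 be pairwise disjoint sets of observed nodes of a causal structure G and let P be any distribution over the observed nodes compatible with G such that S1 ⫫ S2 | S3 under P. If S is a further set of observed nodes, disjoint from S1, S2 and S3, that is d-separated (by the empty conditioning set) from each of S1, S2 and S3 in G, then P also satisfies the conditional independences (S1 ∪ S) ⫫ S2 | S3, S1 ⫫ (S2 ∪ S) | S3, and S1 ⫫ S2 | (S3 ∪ S). -/
/-!
Framework for cyclic and fine-tuned causal models and their compatibility with
space-time (Vilasini–Colbeck).

* `CausalStructure V` : a directed graph (possibly cyclic) on `V` with a set of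
  observed nodes; each observed node carries a random variable with finitely
  many values (here, `Val v`).
* d-separation is defined via walks that may traverse edges in either direction.
* A distribution over the observed nodes is `Compatible` with the graph if
  d-separation implies conditional independence.
* `InterventionalModel` packages, for each set of intervened nodes, the
  post-intervention distribution `P_{G_do(X)}` and the augmented distributions
  `P_{(G_do(X))_{I_Z}}` (both carried jointly with the intervention variables,
  which live on the `Sum.inr` copy of `V` and take values in `Option (Val v)`,
  `none` meaning "idle" and `some x` meaning "do(x)"), together with the
  defining equations (1)–(4) of the framework.
* `Affects M X Y Z W` is "X affects Y given {do(Z), W}".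
-/

open Classical

lemma dsep_union_right {V : Type} {G : CausalStructure V} {X A B Z : Set V}
    (h1 : G.DSep X A Z) (h2 : G.DSep X B Z) : G.DSep X (A ∪ B) Z := by
  intro p hw hx hy
  obtain ⟨y, hy', hl⟩ := hy
  rcases hy' with h | h
  · exact h1 p hw hx ⟨y, h, hl⟩
  · exact h2 p hw hx ⟨y, h, hl⟩

lemma pr_agree_empty {V : Type} [Fintype V] [DecidableEq V] {Val : V → Type}
    [∀ v, Fintype (Val v)] {P : (∀ v, Val v) → ℝ} (hP : IsProbDist P)
    (x : ∀ v, Val v) : Pr P (agreeE (∅ : Set V) x) = 1 := by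
  have : agreeE (∅ : Set V) x = Set.univ := by
    ext f; simp [agreeE]
  rw [this]
  simpa [Pr, Set.indicator_univ] using hP.2

/-- Lemma 1 of the paper. If `S1 ⫫ S2 | S3` holds in a
distribution compatible with `G`, and `S` is d-separated (by `∅`) from each of
`S1`, `S2`, `S3`, then `S1 ∪ S ⫫ S2 | S3`, `S1 ⫫ S2 ∪ S | S3` and
`S1 ⫫ S2 | S3 ∪ S`. -/
theorem lemma_CI
    {V : Type} [Fintype V] [DecidableEq V] (G : CausalStructure V)
    {Val : V → Type} [∀ v, Fintype (Val v)] (P : (∀ v, Val v) → ℝ)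
    (hP : IsProbDist P) (hcomp : Compatible G P)
    (S1 S2 S3 S : Set V)
    (hS1 : S1 ⊆ G.observed) (hS2 : S2 ⊆ G.observed) (hS3 : S3 ⊆ G.observed)
    (hS : S ⊆ G.observed)
    (h12 : Disjoint S1 S2) (h13 : Disjoint S1 S3) (h23 : Disjoint S2 S3)
    (hd1 : Disjoint S S1) (hd2 : Disjoint S S2) (hd3 : Disjoint S S3)
    (hCI : CondIndep P S1 S2 S3)
    (hds1 : G.DSep S S1 ∅) (hds2 : G.DSep S S2 ∅) (hds3 : G.DSep S S3 ∅) :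
    CondIndep P (S1 ∪ S) S2 S3 ∧ CondIndep P S1 (S2 ∪ S) S3 ∧
      CondIndep P S1 S2 (S3 ∪ S) := by
  -- factorization lemma: for A disjoint from S with DSep S A ∅,
  -- Pr(agree (S ∪ A)) = Pr(agree S) * Pr(agree A)
  have factor : ∀ A : Set V, A ⊆ G.observed → Disjoint S A → G.DSep S A ∅ →
      ∀ x : ∀ v, Val v,
        Pr P (agreeE (S ∪ A) x) = Pr P (agreeE S x) * Pr P (agreeE A x) := by
    intro A hA hdisj hds x
    have h := hcomp S A ∅ hS hA (Set.empty_subset _) hdisj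
      (Set.disjoint_empty S) (Set.disjoint_empty A) hds x
    simpa [Set.union_empty, pr_agree_empty hP] using h
  have f123 := factor (S1 ∪ S2 ∪ S3)
    (Set.union_subset (Set.union_subset hS1 hS2) hS3)
    (by simp [Set.disjoint_union_right, hd1, hd2, hd3])
    (dsep_union_right (dsep_union_right hds1 hds2) hds3)
  have f13 := factor (S1 ∪ S3) (Set.union_subset hS1 hS3)
    (by simp [Set.disjoint_union_right, hd1, hd3])
    (dsep_union_right hds1 hds3)
  have f23 := factor (S2 ∪ S3) (Set.union_subset hS2 hS3)
    (by simp [Set.disjoint_union_right, hd2, hd3])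
    (dsep_union_right hds2 hds3)
  have f3 := factor S3 hS3 hd3 hds3
  refine ⟨?_, ?_, ?_⟩
  · intro x
    have e1 : (S1 ∪ S) ∪ S2 ∪ S3 = S ∪ (S1 ∪ S2 ∪ S3) := by
      ext v; simp [Set.mem_union]; tauto
    have e2 : (S1 ∪ S) ∪ S3 = S ∪ (S1 ∪ S3) := by
      ext v; simp [Set.mem_union]; tauto
    rw [e1, e2, f123 x, f13 x]
    linear_combination Pr P (agreeE S x) * hCI x
  · intro x
    have e1 : S1 ∪ (S2 ∪ S) ∪ S3 = S ∪ (S1 ∪ S2 ∪ S3) := by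
      ext v; simp [Set.mem_union]; tauto
    have e2 : (S2 ∪ S) ∪ S3 = S ∪ (S2 ∪ S3) := by
      ext v; simp [Set.mem_union]; tauto
    rw [e1, e2, f123 x, f23 x]
    linear_combination Pr P (agreeE S x) * hCI x
  · intro x
    have e1 : S1 ∪ S2 ∪ (S3 ∪ S) = S ∪ (S1 ∪ S2 ∪ S3) := by
      ext v; simp [Set.mem_union]; tauto
    have e2 : S1 ∪ (S3 ∪ S) = S ∪ (S1 ∪ S3) := by
      ext v; simp [Set.mem_union]; tauto
    have e3 : S2 ∪ (S3 ∪ S) = S ∪ (S2 ∪ S3) := by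
      ext v; simp [Set.mem_union]; tauto
    have e4 : S3 ∪ S = S ∪ S3 := Set.union_comm _ _
    rw [e1, e2, e3, e4, f123 x, f13 x, f23 x, f3 x]
    linear_combination Pr P (agreeE S x) * Pr P (agreeE S x) * hCI x
end

section
/- Let (G,P) be a causal model with an interventional model and let X, Y, Z, W be pairwise disjoint subsets of the observed nodes. Then: (1) if X affects Y given {do(Z), W}, then X affects Y ∪ W given do(Z); (2) if 'X affects Y given {do(Z), W}' holds and is irreducible, then 'X affects Y ∪ W given do(Z)' holds and is irreducible; (3) X affects Y ∪ W given do(Z) if and only if X affects Y given {do(Z), W} or X affects W given do(Z). -/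
/-!
Framework for cyclic and fine-tuned causal models and their compatibility with
space-time (Vilasini–Colbeck).

* `CausalStructure V` : a directed graph (possibly cyclic) on `V` with a set of
  observed nodes; each observed node carries a random variable with finitely
  many values (here, `Val v`).
* d-separation is defined via walks that may traverse edges in either direction.
* A distribution over the observed nodes is `Compatible` with the graph if
  d-separation implies conditional independence.
* `InterventionalModel` packages, for each set of intervened nodes, the
  post-intervention distribution `P_{G_do(X)}` and the augmented distributions
  `P_{(G_do(X))_{I_Z}}` (both carried jointly with the intervention variables,
  which live on the `Sum.inr` copy of `V` and take values in `Option (Val v)`,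
  `none` meaning "idle" and `some x` meaning "do(x)"), together with the
  defining equations (1)–(4) of the framework.
* `Affects M X Y Z W` is "X affects Y given {do(Z), W}".
-/

open Classical

/-! ### Auxiliary lemmas for Statement 11 -/

section AffectsAux

set_option linter.unusedSectionVars false

open Classical

variable {V : Type} [Fintype V] [DecidableEq V] {Val : V → Type} [∀ v, Fintype (Val v)]

lemma Pr_nonneg'' {ι : Type} [Fintype ι] [DecidableEq ι] {Wt : ι → Type} [∀ i, Fintype (Wt i)]
    {P : (∀ i, Wt i) → ℝ} (hP : ∀ f, 0 ≤ P f) (E : Set (∀ i, Wt i)) : 0 ≤ Pr P E :=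
  Finset.sum_nonneg fun f _ => Set.indicator_apply_nonneg fun _ => hP f

lemma Pr_mono'' {ι : Type} [Fintype ι] [DecidableEq ι] {Wt : ι → Type} [∀ i, Fintype (Wt i)]
    {P : (∀ i, Wt i) → ℝ} (hP : ∀ f, 0 ≤ P f) {E F : Set (∀ i, Wt i)} (h : E ⊆ F) :
    Pr P E ≤ Pr P F :=
  Finset.sum_le_sum fun f _ => Set.indicator_le_indicator_of_subset h hP f

lemma agreeE_union'' (A B : Set V) (x : ∀ v, Val v) :
    agreeE (A ∪ B) x = agreeE A x ∩ agreeE B x := by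
  ext g
  simp only [agreeE, Set.mem_setOf_eq, Set.mem_inter_iff, Set.mem_union, or_imp, forall_and]

lemma agreeE_congr'' (A : Set V) {x y : ∀ v, Val v} (h : ∀ v ∈ A, x v = y v) :
    agreeE A x = agreeE A y := by
  ext g
  exact ⟨fun hg v hv => (hg v hv).trans (h v hv), fun hg v hv => (hg v hv).trans (h v hv).symm⟩

lemma inlE_inter'' (E F : Set (∀ v, Val v)) :
    inlE (E ∩ F) = inlE E ∩ inlE F := rfl

/-- Merge two assignments: values of `x` on `A`, values of `y` elsewhere. -/
noncomputable def mrg (A : Set V) (x y : ∀ v, Val v) : ∀ v, Val v := fun v => if v ∈ A then x v else y v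

lemma mrg_on {A : Set V} {x y : ∀ v, Val v} {v : V} (h : v ∈ A) : mrg A x y v = x v := if_pos h

lemma mrg_off {A : Set V} {x y : ∀ v, Val v} {v : V} (h : v ∉ A) : mrg A x y v = y v := if_neg h

/-- Assignments fixed on `A` are in bijection with assignments off `A`. -/
noncomputable def fiberEquiv (A : Set V) (c : ∀ v, Val v) :
    {t : ∀ v, Val v // ∀ v ∈ A, t v = c v} ≃ (∀ v : {v : V // v ∉ A}, Val v) where
  toFun t v := t.1 v.1
  invFun s := ⟨fun v => if h : v ∈ A then c v else s ⟨v, h⟩, fun v hv => dif_pos hv⟩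
  left_inv t := by
    apply Subtype.ext; funext v
    show (if h : v ∈ A then c v else t.1 v) = t.1 v
    by_cases h : v ∈ A
    · rw [dif_pos h, t.2 v h]
    · rw [dif_neg h]
  right_inv s := by
    funext v
    show (if h : (v : V) ∈ A then c v else s ⟨v, h⟩) = s v
    rw [dif_neg v.2]

lemma vals_nonempty {P : (∀ v, Val v) → ℝ} (hP : IsProbDist P) (v : V) : Nonempty (Val v) := by
  by_contra h
  rw [not_nonempty_iff] at h
  haveI : IsEmpty (∀ v, Val v) := ⟨fun f => h.false (f v)⟩
  have h1 := hP.2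
  rw [Finset.univ_eq_empty, Finset.sum_empty] at h1
  norm_num at h1

/-- Summing the probability of `{Y = t} ∩ C` over all `t` gives a constant multiple
of the probability of `C`. -/
lemma sum_pr_agree (P : (∀ w, AugVal Val w) → ℝ) (A : Set V) (C : Set (∀ w, AugVal Val w)) :
    ∑ t : ∀ v, Val v, Pr P (inlE (agreeE A t) ∩ C)
      = (Fintype.card (∀ v : {v : V // v ∉ A}, Val v) : ℝ) * Pr P C := by
  unfold Pr
  rw [Finset.sum_comm, Finset.mul_sum]
  refine Finset.sum_congr rfl fun g _ => ?_
  by_cases hg : g ∈ C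
  · have hind : ∀ t : ∀ v, Val v, (inlE (agreeE A t) ∩ C).indicator P g
        = if (∀ v ∈ A, t v = g (Sum.inl v)) then P g else 0 := by
      intro t
      by_cases ht : ∀ v ∈ A, t v = g (Sum.inl v)
      · rw [if_pos ht, Set.indicator_of_mem]
        exact ⟨fun v hv => (ht v hv).symm, hg⟩
      · rw [if_neg ht, Set.indicator_of_notMem]
        rintro ⟨h1, -⟩; exact ht fun v hv => (h1 v hv).symm
    simp only [hind]
    rw [Finset.sum_ite, Finset.sum_const, Finset.sum_const_zero, add_zero, nsmul_eq_mul,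
      Set.indicator_of_mem hg]
    congr 2
    rw [← Fintype.card_subtype]
    exact Fintype.card_congr (fiberEquiv A (fun v => g (Sum.inl v)))
  · have hind : ∀ t : ∀ v, Val v, (inlE (agreeE A t) ∩ C).indicator P g = 0 := fun t =>
      Set.indicator_of_notMem (fun h => hg h.2) P
    simp only [hind, Finset.sum_const_zero, Set.indicator_of_notMem hg, mul_zero]

lemma div_switch {a b a' b' c c' : ℝ} (hc : c ≠ 0) (hc' : c' ≠ 0) (hb : b ≠ 0) (hb' : b' ≠ 0)
    (h1 : a / c = a' / c') (h2 : b / c = b' / c') : a / b = a' / b' := by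
  rw [div_eq_div_iff hc hc'] at h1 h2
  rw [div_eq_div_iff hb hb']
  have key : a * b' * (c * c') = a' * b * (c * c') := by
    calc a * b' * (c * c') = (a * c') * (b' * c) := by ring
      _ = (a' * c) * (b' * c) := by rw [h1]
      _ = (a' * c) * (b * c') := by rw [← h2]
      _ = a' * b * (c * c') := by ring
  exact mul_right_cancel₀ (mul_ne_zero hc hc') key

end AffectsAux
section MainAux

set_option linter.unusedSectionVars false

open Classical

variable {V : Type} [Fintype V] [DecidableEq V] {Val : V → Type} [∀ v, Fintype (Val v)]
  {G : CausalStructure V} {P : (∀ v, Val v) → ℝ}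

/-- Part (1): if `X` affects `Y` given `{do(Z), W}` then `X` affects `Y ∪ W` given `do(Z)`. -/
lemma affects_union_aux (hne : ∀ v, Nonempty (Val v)) (M : InterventionalModel G Val P)
    {X Y Z W : Set V} (h : Affects M X Y Z W) : Affects M X (Y ∪ W) Z ∅ := by
  obtain ⟨hX, hY, hZ, hW, ⟨dXY, dXZ, dXW, dYZ, dYW, dZW⟩, f, y, hb, hb', hne2⟩ := h
  refine ⟨hX, Set.union_subset hY hW, hZ, Set.empty_subset _,
    ⟨Set.disjoint_union_right.mpr ⟨dXY, dXW⟩, dXZ, Set.disjoint_empty _,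
     Set.disjoint_union_left.mpr ⟨dYZ, dZW.symm⟩, Set.disjoint_empty _, Set.disjoint_empty _⟩, ?_⟩
  simp only [Set.union_empty]
  by_contra H
  push_neg at H
  have hC1 : inlE (Val := Val) (agreeE (X ∪ Z ∪ W) f)
      = inlE (agreeE W f) ∩ inlE (agreeE (X ∪ Z) f) := by
    rw [agreeE_union'', inlE_inter'', Set.inter_comm]
  have hC2 : inlE (Val := Val) (agreeE (Z ∪ W) f)
      = inlE (agreeE W f) ∩ inlE (agreeE Z f) := by
    rw [agreeE_union'', inlE_inter'', Set.inter_comm]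
  rw [hC1] at hb hne2
  rw [hC2] at hb' hne2
  have hc : 0 < Pr (M.post (X ∪ Z)) (inlE (agreeE (X ∪ Z) f)) :=
    lt_of_lt_of_le hb (Pr_mono'' (M.post_prob _).1 Set.inter_subset_right)
  have hc' : 0 < Pr (M.post Z) (inlE (agreeE Z f)) :=
    lt_of_lt_of_le hb' (Pr_mono'' (M.post_prob _).1 Set.inter_subset_right)
  have eYW : ∀ t : ∀ v, Val v, inlE (Val := Val) (agreeE (Y ∪ W) (mrg Y t f))
      = inlE (agreeE Y t) ∩ inlE (agreeE W f) := by
    intro t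
    have e1 : agreeE Y (mrg Y t f) = agreeE Y t := agreeE_congr'' Y fun v hv => mrg_on hv
    have e2 : agreeE W (mrg Y t f) = agreeE W f :=
      agreeE_congr'' W fun v hv => mrg_off (Set.disjoint_right.mp dYW hv)
    rw [agreeE_union'', e1, e2, inlE_inter'']
  have key : ∀ t : ∀ v, Val v,
      Pr (M.post (X ∪ Z)) (inlE (agreeE Y t) ∩ (inlE (agreeE W f) ∩ inlE (agreeE (X ∪ Z) f)))
          / Pr (M.post (X ∪ Z)) (inlE (agreeE (X ∪ Z) f))
        = Pr (M.post Z) (inlE (agreeE Y t) ∩ (inlE (agreeE W f) ∩ inlE (agreeE Z f)))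
          / Pr (M.post Z) (inlE (agreeE Z f)) := by
    intro t
    have hH := H f (mrg Y t f) hc hc'
    simp only [cPr] at hH
    rw [eYW t] at hH
    simpa only [Set.inter_assoc] using hH
  have hN : (0:ℝ) < (Fintype.card (∀ v : {v : V // v ∉ Y}, Val v) : ℝ) := by
    haveI : Nonempty (∀ v : {v : V // v ∉ Y}, Val v) := ⟨fun v => (hne v.1).some⟩
    exact_mod_cast Fintype.card_pos
  have keyb :
      Pr (M.post (X ∪ Z)) (inlE (agreeE W f) ∩ inlE (agreeE (X ∪ Z) f))
          / Pr (M.post (X ∪ Z)) (inlE (agreeE (X ∪ Z) f))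
        = Pr (M.post Z) (inlE (agreeE W f) ∩ inlE (agreeE Z f))
          / Pr (M.post Z) (inlE (agreeE Z f)) := by
    have hs : (Fintype.card (∀ v : {v : V // v ∉ Y}, Val v) : ℝ)
        * (Pr (M.post (X ∪ Z)) (inlE (agreeE W f) ∩ inlE (agreeE (X ∪ Z) f))
            / Pr (M.post (X ∪ Z)) (inlE (agreeE (X ∪ Z) f)))
        = (Fintype.card (∀ v : {v : V // v ∉ Y}, Val v) : ℝ)
        * (Pr (M.post Z) (inlE (agreeE W f) ∩ inlE (agreeE Z f))
            / Pr (M.post Z) (inlE (agreeE Z f))) := by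
      rw [← mul_div_assoc, ← mul_div_assoc, ← sum_pr_agree, ← sum_pr_agree,
        Finset.sum_div, Finset.sum_div]
      exact Finset.sum_congr rfl fun t _ => key t
    exact mul_left_cancel₀ hN.ne' hs
  simp only [cPr] at hne2
  exact hne2 (div_switch hc.ne' hc'.ne' hb.ne' hb'.ne' (key y) keyb)

/-- If `X` affects `W` given `do(Z)` then `X` affects `Y ∪ W` given `do(Z)`. -/
lemma affects_unionW_aux (hne : ∀ v, Nonempty (Val v)) (M : InterventionalModel G Val P)
    {X Y Z W : Set V} (hYo : Y ⊆ G.observed) (dXY : Disjoint X Y) (dYZ : Disjoint Y Z)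
    (dYW : Disjoint Y W) (h : Affects M X W Z ∅) : Affects M X (Y ∪ W) Z ∅ := by
  obtain ⟨hX, hW, hZ, -, ⟨dXW, dXZ, -, dWZ, -, -⟩, f, y, hcb, hcb', hne2⟩ := h
  simp only [Set.union_empty] at hcb hcb' hne2
  refine ⟨hX, Set.union_subset hYo hW, hZ, Set.empty_subset _,
    ⟨Set.disjoint_union_right.mpr ⟨dXY, dXW⟩, dXZ, Set.disjoint_empty _,
     Set.disjoint_union_left.mpr ⟨dYZ, dWZ⟩, Set.disjoint_empty _, Set.disjoint_empty _⟩, ?_⟩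
  simp only [Set.union_empty]
  by_contra H
  push_neg at H
  have eYW : ∀ t : ∀ v, Val v, inlE (Val := Val) (agreeE (Y ∪ W) (mrg Y t y))
      = inlE (agreeE Y t) ∩ inlE (agreeE W y) := by
    intro t
    have e1 : agreeE Y (mrg Y t y) = agreeE Y t := agreeE_congr'' Y fun v hv => mrg_on hv
    have e2 : agreeE W (mrg Y t y) = agreeE W y :=
      agreeE_congr'' W fun v hv => mrg_off (Set.disjoint_right.mp dYW hv)
    rw [agreeE_union'', e1, e2, inlE_inter'']
  have key : ∀ t : ∀ v, Val v,
      Pr (M.post (X ∪ Z)) (inlE (agreeE Y t) ∩ (inlE (agreeE W y) ∩ inlE (agreeE (X ∪ Z) f)))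
          / Pr (M.post (X ∪ Z)) (inlE (agreeE (X ∪ Z) f))
        = Pr (M.post Z) (inlE (agreeE Y t) ∩ (inlE (agreeE W y) ∩ inlE (agreeE Z f)))
          / Pr (M.post Z) (inlE (agreeE Z f)) := by
    intro t
    have hH := H f (mrg Y t y) hcb hcb'
    simp only [cPr] at hH
    rw [eYW t] at hH
    simpa only [Set.inter_assoc] using hH
  have hN : (0:ℝ) < (Fintype.card (∀ v : {v : V // v ∉ Y}, Val v) : ℝ) := by
    haveI : Nonempty (∀ v : {v : V // v ∉ Y}, Val v) := ⟨fun v => (hne v.1).some⟩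
    exact_mod_cast Fintype.card_pos
  have keyb :
      Pr (M.post (X ∪ Z)) (inlE (agreeE W y) ∩ inlE (agreeE (X ∪ Z) f))
          / Pr (M.post (X ∪ Z)) (inlE (agreeE (X ∪ Z) f))
        = Pr (M.post Z) (inlE (agreeE W y) ∩ inlE (agreeE Z f))
          / Pr (M.post Z) (inlE (agreeE Z f)) := by
    have hs : (Fintype.card (∀ v : {v : V // v ∉ Y}, Val v) : ℝ)
        * (Pr (M.post (X ∪ Z)) (inlE (agreeE W y) ∩ inlE (agreeE (X ∪ Z) f))
            / Pr (M.post (X ∪ Z)) (inlE (agreeE (X ∪ Z) f)))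
        = (Fintype.card (∀ v : {v : V // v ∉ Y}, Val v) : ℝ)
        * (Pr (M.post Z) (inlE (agreeE W y) ∩ inlE (agreeE Z f))
            / Pr (M.post Z) (inlE (agreeE Z f))) := by
      rw [← mul_div_assoc, ← mul_div_assoc, ← sum_pr_agree, ← sum_pr_agree,
        Finset.sum_div, Finset.sum_div]
      exact Finset.sum_congr rfl fun t _ => key t
    exact mul_left_cancel₀ hN.ne' hs
  simp only [cPr] at hne2
  exact hne2 keyb

lemma split_arith {a b c a' b' c' : ℝ} (ha0 : 0 ≤ a) (hab : a ≤ b) (ha0' : 0 ≤ a') (hab' : a' ≤ b')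
    (hb0 : 0 ≤ b) (hb0' : 0 ≤ b') (hc : 0 < c) (hc' : 0 < c') (hne : a / c ≠ a' / c') :
    (0 < b ∧ 0 < b' ∧ a / b ≠ a' / b') ∨ b / c ≠ b' / c' := by
  by_cases hbc : b / c = b' / c'
  · left
    have hb : 0 < b := by
      rcases hb0.lt_or_eq with h0 | h0
      · exact h0
      · exfalso
        have haz : a = 0 := le_antisymm (by rw [h0]; exact hab) ha0
        have hbz' : b' = 0 := by
          have hx : b' / c' = 0 := by rw [← hbc, ← h0, zero_div]
          rcases div_eq_zero_iff.mp hx with hx | hx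
          · exact hx
          · exact absurd hx hc'.ne'
        have haz' : a' = 0 := le_antisymm (by rw [← hbz']; exact hab') ha0'
        exact hne (by rw [haz, haz', zero_div, zero_div])
    have hb' : 0 < b' := by
      rcases hb0'.lt_or_eq with h0 | h0
      · exact h0
      · exfalso
        have hbz : b = 0 := by
          have hx : b / c = 0 := by rw [hbc, ← h0, zero_div]
          rcases div_eq_zero_iff.mp hx with hx | hx
          · exact hx
          · exact absurd hx hc.ne'
        exact hb.ne' hbz
    refine ⟨hb, hb', fun hEq => hne (div_switch hb.ne' hb'.ne' hc.ne' hc'.ne' hEq ?_)⟩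
    have h1 : (b / c)⁻¹ = (b' / c')⁻¹ := by rw [hbc]
    rwa [inv_div, inv_div] at h1
  · right; exact hbc

/-- Splitting: if `X` affects `Y ∪ W` given `do(Z)`, then `X` affects `Y` given
`{do(Z), W}` or `X` affects `W` given `do(Z)`. -/
lemma affects_split_aux (M : InterventionalModel G Val P) {X Y Z W : Set V}
    (hYo : Y ⊆ G.observed) (hWo : W ⊆ G.observed) (dd : PairwiseDisj4 X Y Z W)
    (h : Affects M X (Y ∪ W) Z ∅) : Affects M X Y Z W ∨ Affects M X W Z ∅ := by
  obtain ⟨dXY, dXZ, dXW, dYZ, dYW, dZW⟩ := dd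
  obtain ⟨hX, hYW, hZ, -, -, f, y, hc, hc', hne2⟩ := h
  simp only [Set.union_empty] at hc hc' hne2
  have nn1 : ∀ E, (0:ℝ) ≤ Pr (M.post (X ∪ Z)) E := fun E => Pr_nonneg'' (M.post_prob _).1 E
  have nn2 : ∀ E, (0:ℝ) ≤ Pr (M.post Z) E := fun E => Pr_nonneg'' (M.post_prob _).1 E
  have eW : agreeE W (mrg W y f) = agreeE W y := agreeE_congr'' W fun v hv => mrg_on hv
  have eXZ : agreeE (X ∪ Z) (mrg W y f) = agreeE (X ∪ Z) f := by
    refine agreeE_congr'' _ fun v hv => mrg_off ?_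
    rcases hv with hv | hv
    · exact Set.disjoint_left.mp dXW hv
    · exact Set.disjoint_left.mp dZW hv
  have eSplit : inlE (Val := Val) (agreeE (Y ∪ W) y) ∩ inlE (agreeE (X ∪ Z) f)
      = inlE (agreeE Y y) ∩ (inlE (agreeE W y) ∩ inlE (agreeE (X ∪ Z) f)) := by
    rw [agreeE_union'', inlE_inter'', Set.inter_assoc]
  have eSplit' : inlE (Val := Val) (agreeE (Y ∪ W) y) ∩ inlE (agreeE Z f)
      = inlE (agreeE Y y) ∩ (inlE (agreeE W y) ∩ inlE (agreeE Z f)) := by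
    rw [agreeE_union'', inlE_inter'', Set.inter_assoc]
  simp only [cPr] at hne2
  rw [eSplit, eSplit'] at hne2
  rcases split_arith (nn1 _) (Pr_mono'' (M.post_prob _).1 Set.inter_subset_right)
      (nn2 _) (Pr_mono'' (M.post_prob _).1 Set.inter_subset_right)
      (nn1 _) (nn2 _) hc hc' hne2 with ⟨hb, hb', hne3⟩ | hne3
  · left
    have eb1 : inlE (Val := Val) (agreeE (X ∪ Z ∪ W) (mrg W y f))
        = inlE (agreeE W y) ∩ inlE (agreeE (X ∪ Z) f) := by
      rw [agreeE_union'', eXZ, eW, inlE_inter'', Set.inter_comm]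
    have eb2 : inlE (Val := Val) (agreeE (Z ∪ W) (mrg W y f))
        = inlE (agreeE W y) ∩ inlE (agreeE Z f) := by
      have eZ : agreeE Z (mrg W y f) = agreeE Z f :=
        agreeE_congr'' Z fun v hv => mrg_off (Set.disjoint_left.mp dZW hv)
      rw [agreeE_union'', eZ, eW, inlE_inter'', Set.inter_comm]
    refine ⟨hX, hYo, hZ, hWo, ⟨dXY, dXZ, dXW, dYZ, dYW, dZW⟩, mrg W y f, y, ?_, ?_, ?_⟩
    · rw [eb1]; exact hb
    · rw [eb2]; exact hb'
    · simp only [cPr]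
      rw [eb1, eb2]
      exact hne3
  · right
    refine ⟨hX, hWo, hZ, Set.empty_subset _,
      ⟨dXW, dXZ, Set.disjoint_empty _, dZW.symm, Set.disjoint_empty _, Set.disjoint_empty _⟩,
      f, y, ?_, ?_, ?_⟩
    · simp only [Set.union_empty]; exact hc
    · simp only [Set.union_empty]; exact hc'
    · simp only [Set.union_empty, cPr]
      exact hne3

end MainAux
/-- Lemma 9. (1) If `X` affects `Y` given `{do(Z), W}` then
`X` affects `Y ∪ W` given `do(Z)`.  (2) Irreducibility is preserved.
(3) `X` affects `Y ∪ W` given `do(Z)` iff `X` affects `Y` given `{do(Z), W}`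
or `X` affects `W` given `do(Z)`. -/
theorem conditional_to_unconditional_affects
    {V : Type} [Fintype V] [DecidableEq V] (G : CausalStructure V)
    {Val : V → Type} [∀ v, Fintype (Val v)] (P : (∀ v, Val v) → ℝ)
    (hP : IsProbDist P) (hcomp : Compatible G P)
    (M : InterventionalModel G Val P)
    (X Y Z W : Set V)
    (hX : X ⊆ G.observed) (hY : Y ⊆ G.observed) (hZ : Z ⊆ G.observed)
    (hW : W ⊆ G.observed) (hd : PairwiseDisj4 X Y Z W) :
    (Affects M X Y Z W → Affects M X (Y ∪ W) Z ∅) ∧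
    (Affects M X Y Z W → IrreducibleAffects M X Y Z W →
      Affects M X (Y ∪ W) Z ∅ ∧ IrreducibleAffects M X (Y ∪ W) Z ∅) ∧
    (Affects M X (Y ∪ W) Z ∅ ↔ (Affects M X Y Z W ∨ Affects M X W Z ∅)) := by
  have hne : ∀ v, Nonempty (Val v) := vals_nonempty hP
  refine ⟨fun h => affects_union_aux hne M h,
    fun h hirr => ⟨affects_union_aux hne M h, fun s hs hsne =>
      affects_union_aux hne M (hirr s hs hsne)⟩, ?_, ?_⟩
  · intro h
    exact affects_split_aux M hY hW hd h
  · rintro (h | h)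
    · exact affects_union_aux hne M h
    · exact affects_unionW_aux hne M hY hd.1 hd.2.2.2.1 hd.2.2.2.2.1 h
end

section
/- Let S be a finite set of random variables and 𝒜 a set of affects relations over S containing a Type 1 or Type 2 affects causal loop (RVs X, Z1, ..., Zk, Y with 'X affects Z1', 'Z1 affects Z2', ..., 'Zk affects Y' and 'Y affects X' in 𝒜; Type 1 is the case k = 0, i.e., 'X affects Y' and 'Y affects X'). Then every embedding of S in a partially ordered set with which 𝒜 is compatible assigns the same location to all the RVs of the loop: O(X) = O(Z1) = ... = O(Zk) = O(Y). In particular, since the loop contains a pair of RVs related by an affects relation, S admits no non-trivial embedding in any partially ordered set with which 𝒜 is compatible. -/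
/-!
Framework for cyclic and fine-tuned causal models and their compatibility with
space-time (Vilasini–Colbeck).

* `CausalStructure V` : a directed graph (possibly cyclic) on `V` with a set of
  observed nodes; each observed node carries a random variable with finitely
  many values (here, `Val v`).
* d-separation is defined via walks that may traverse edges in either direction.
* A distribution over the observed nodes is `Compatible` with the graph if
  d-separation implies conditional independence.
* `InterventionalModel` packages, for each set of intervened nodes, the
  post-intervention distribution `P_{G_do(X)}` and the augmented distributions
  `P_{(G_do(X))_{I_Z}}` (both carried jointly with the intervention variables,
  which live on the `Sum.inr` copy of `V` and take values in `Option (Val v)`,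
  `none` meaning "idle" and `some x` meaning "do(x)"), together with the
  defining equations (1)–(4) of the framework.
* `Affects M X Y Z W` is "X affects Y given {do(Z), W}".
-/

open Classical

/-! For an RV `x` and a relation "x affects y", compat1 (applicable since singleton-source
relations are irreducible) gives `R_y ⊆ R_x`, which by compat2 reads `F̄(y) ⊆ F̄(x)`, i.e.
`O(x) ≼ O(y)`. Going once around the loop, antisymmetry of `≼` forces all locations to agree. -/

instance Spacetime.instPartialOrder (S : Spacetime) : PartialOrder S.carrier where
  le := S.le
  le_refl := S.le_refl
  le_trans := S.le_trans
  le_antisymm := S.le_antisymm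

theorem Fin.apply_eq_apply_of_le_succ_of_last_le_zero {α : Type*} [PartialOrder α] {n : ℕ}
    {f : Fin (n + 1) → α} (hsucc : ∀ i : Fin n, f i.castSucc ≤ f i.succ)
    (hlast : f (Fin.last n) ≤ f 0) (i j : Fin (n + 1)) : f i = f j := by
  have hmono : Monotone f := Fin.monotone_iff_le_succ.2 hsucc
  have h_eq_zero : ∀ k, f k = f 0 := fun k =>
    le_antisymm ((hmono (Fin.le_last k)).trans hlast) (hmono (Fin.zero_le k))
  rw [h_eq_zero i, h_eq_zero j]

namespace STEmbedding

variable {V : Type} {S : Spacetime} {E : STEmbedding V S}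

@[simp]
theorem regOf_empty : E.regOf ∅ = Set.univ := by
  simp [regOf]

@[simp]
theorem regOf_singleton (x : V) : E.regOf {x} = E.reg x := by
  simp [regOf]

theorem reg_subset_of_plainRel {A : AffectsFamily V} (hc : Compat1 A E) {x y : V}
    (hrel : plainRel {x} {y} ∈ A.rels) (hirr : plainRel {x} {y} ∈ A.irr) :
    E.reg y ⊆ E.reg x := by
  simpa [plainRel] using hc _ hrel hirr

theorem loc_le_loc_of_reg_subset (hc : Compat2 E) {x y : V} (h : E.reg y ⊆ E.reg x) :
    E.loc x ≤ E.loc y := by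
  have hy : E.loc y ∈ E.reg y := by
    rw [hc y]
    exact le_refl (E.loc y)
  have hx := h hy
  rwa [hc x] at hx

end STEmbedding

theorem type12_loop_no_nontrivial_embedding_general
    {V : Type} (A : AffectsFamily V)
    (hsing : ∀ r ∈ A.rels, (∃ x, r.src = {x}) → r ∈ A.irr)
    (n : ℕ) (c : Fin (n + 2) → V)
    (hchain : ∀ i : Fin (n + 1), plainRel {c i.castSucc} {c i.succ} ∈ A.rels)
    (hback : plainRel {c (Fin.last (n + 1))} {c 0} ∈ A.rels) :
    (∀ (S : Spacetime) (E : STEmbedding V S), CompatFam A E →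
      ∀ i j : Fin (n + 2), E.loc (c i) = E.loc (c j)) ∧
    (∀ (S : Spacetime) (E : STEmbedding V S),
      ¬ (NonTrivialEmb A E ∧ CompatFam A E)) := by
  have loc_eq : ∀ (S : Spacetime) (E : STEmbedding V S), CompatFam A E →
      ∀ i j : Fin (n + 2), E.loc (c i) = E.loc (c j) := by
    rintro S E ⟨hc1, hc2⟩
    have step : ∀ {x y : V}, plainRel {x} {y} ∈ A.rels → E.loc x ≤ E.loc y := fun hrel =>
      STEmbedding.loc_le_loc_of_reg_subset hc2
        (STEmbedding.reg_subset_of_plainRel hc1 hrel (hsing _ hrel ⟨_, rfl⟩))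
    exact Fin.apply_eq_apply_of_le_succ_of_last_le_zero (f := E.loc ∘ c)
      (fun i => step (hchain i)) (step hback)
  exact ⟨loc_eq, fun S E ⟨hnt, hc⟩ => hnt _ _ (hchain 0) (loc_eq S E hc _ _)⟩

/-- Lemma 11. If `𝒜` contains a Type 1 or Type 2 affects
causal loop `c 0 → c 1 → ⋯ → c (n+1) → c 0` (Type 1 is the case `n = 0`), then
every compatible embedding assigns the same location to all RVs of the loop;
in particular there is no non-trivial compatible embedding in any partially
ordered set. -/
theorem type12_loop_no_nontrivial_embedding
    {V : Type} [Fintype V] (A : AffectsFamily V)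
    (hirr : A.irr ⊆ A.rels)
    (hsing : ∀ r ∈ A.rels, (∃ x, r.src = {x}) → r ∈ A.irr)
    (n : ℕ) (c : Fin (n + 2) → V)
    (hchain : ∀ i : Fin (n + 1), plainRel {c i.castSucc} {c i.succ} ∈ A.rels)
    (hback : plainRel {c (Fin.last (n + 1))} {c 0} ∈ A.rels) :
    (∀ (S : Spacetime) (E : STEmbedding V S), CompatFam A E →
      ∀ i j : Fin (n + 2), E.loc (c i) = E.loc (c j)) ∧
    (∀ (S : Spacetime) (E : STEmbedding V S),
      ¬ (NonTrivialEmb A E ∧ CompatFam A E)) :=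
  type12_loop_no_nontrivial_embedding_general A hsing n c hchain hback
end
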